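/- arXiv:2507.14684 — 5 statements merged into one kernel-verified Lean document; each statement's English description precedes it below -/
import Mathlib

section
/- For all x > 0 and ν > -1/2, the modified Bessel function of the first kind satisfies (x/2)^ν / Γ(ν+1) < I_ν(x) < (x/2)^ν · e^x / Γ(ν+1). -/
open Real

/-- Modified Bessel function of the first kind of order `ν`,
`I_ν(x) = Σ_{m=0}^∞ (1/(m! Γ(m+ν+1))) (x/2)^{2m+ν}`. -/
noncomputable def besselI (ν x : ℝ) : ℝ :=
  ∑' m : ℕ, (1 / ((m.factorial : ℝ) * Real.Gamma ((m : ℝ) + ν + 1))) *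
    (x / 2) ^ (2 * (m : ℝ) + ν)

lemma gammaAux_pos (ν : ℝ) (hν : -1/2 < ν) (m : ℕ) : 0 < Real.Gamma ((m : ℝ) + ν + 1) := by
  apply Real.Gamma_pos_of_pos
  have : (0:ℝ) ≤ m := Nat.cast_nonneg m
  linarith

lemma key_ineq (ν : ℝ) (hν : -1/2 < ν) : ∀ m : ℕ,
    Real.Gamma (ν + 1) * ((2*m).factorial : ℝ) ≤
      4 ^ m * (m.factorial : ℝ) * Real.Gamma ((m : ℝ) + ν + 1) := by
  intro m
  induction m with
  | zero => simp
  | succ m ih =>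
    have hΓ : 0 < Real.Gamma ((m : ℝ) + ν + 1) := gammaAux_pos ν hν m
    have hΓ' : Real.Gamma ((m+1 : ℕ) + ν + 1) = ((m : ℝ) + ν + 1) * Real.Gamma ((m : ℝ) + ν + 1) := by
      have : ((m+1 : ℕ) : ℝ) + ν + 1 = ((m : ℝ) + ν + 1) + 1 := by push_cast; ring
      rw [this, Real.Gamma_add_one]
      have : (0:ℝ) ≤ m := Nat.cast_nonneg m
      intro h; rw [h] at hΓ; simp at hΓ
    have hfac : ((2*(m+1)).factorial : ℝ) = (2*m+2) * (2*m+1) * ((2*m).factorial : ℝ) := by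
      have : 2*(m+1) = (2*m+1) + 1 := by ring
      rw [this, Nat.factorial_succ, Nat.factorial_succ]
      push_cast; ring
    have hm : (0:ℝ) ≤ m := Nat.cast_nonneg m
    have hfacpos : (0:ℝ) < (m.factorial : ℝ) := by exact_mod_cast m.factorial_pos
    have h4 : (0:ℝ) < 4 ^ m := by positivity
    rw [hΓ', hfac]
    have step : (2*(m:ℝ)+2) * (2*m+1) ≤ 4 * (m+1) * ((m : ℝ) + ν + 1) := by nlinarith
    calc Real.Gamma (ν + 1) * ((2*(m:ℝ)+2) * (2*(m:ℝ)+1) * ((2*m).factorial : ℝ))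
        = (2*(m:ℝ)+2) * (2*(m:ℝ)+1) * (Real.Gamma (ν + 1) * ((2*m).factorial : ℝ)) := by ring
      _ ≤ (2*(m:ℝ)+2) * (2*(m:ℝ)+1) * (4 ^ m * (m.factorial : ℝ) * Real.Gamma ((m : ℝ) + ν + 1)) := by
          apply mul_le_mul_of_nonneg_left ih; nlinarith
      _ ≤ 4 * ((m:ℝ)+1) * ((m : ℝ) + ν + 1) * (4 ^ m * (m.factorial : ℝ) * Real.Gamma ((m : ℝ) + ν + 1)) := by
          apply mul_le_mul_of_nonneg_right step; positivity
      _ = 4 ^ (m+1) * (((m+1 : ℕ)).factorial : ℝ) * (((m : ℝ) + ν + 1) * Real.Gamma ((m : ℝ) + ν + 1)) := by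
          rw [Nat.factorial_succ]; push_cast; ring

theorem besselI_bounds (x ν : ℝ) (hx : 0 < x) (hν : -1/2 < ν) :
    (x / 2) ^ ν / Real.Gamma (ν + 1) < besselI ν x ∧
    besselI ν x < (x / 2) ^ ν * Real.exp x / Real.Gamma (ν + 1) := by
  have hx2 : 0 < x / 2 := by linarith
  have hΓν : 0 < Real.Gamma (ν + 1) := Real.Gamma_pos_of_pos (by linarith)
  set f : ℕ → ℝ := fun m => (1 / ((m.factorial : ℝ) * Real.Gamma ((m : ℝ) + ν + 1))) *
    (x / 2) ^ (2 * (m : ℝ) + ν) with hf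
  set C : ℝ := (x / 2) ^ ν / Real.Gamma (ν + 1) with hC
  have hCpos : 0 < C := by
    apply div_pos (Real.rpow_pos_of_pos hx2 ν) hΓν
  have hfpos : ∀ m, 0 < f m := by
    intro m
    apply mul_pos
    · apply div_pos one_pos (mul_pos (by exact_mod_cast m.factorial_pos) (gammaAux_pos ν hν m))
    · exact Real.rpow_pos_of_pos hx2 _
  -- rewrite rpow
  have hrpow : ∀ m : ℕ, (x / 2) ^ (2 * (m : ℝ) + ν) = (x/2) ^ (2*m) * (x/2) ^ ν := by
    intro m
    rw [Real.rpow_add hx2]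
    congr 1
    rw [show (2 * (m:ℝ)) = ((2*m : ℕ) : ℝ) by push_cast; ring, Real.rpow_natCast]
  -- termwise bound : f m ≤ C * x^(2m)/(2m)!
  have hbound : ∀ m : ℕ, f m ≤ C * (x ^ (2*m) / ((2*m).factorial : ℝ)) := by
    intro m
    have hΓm := gammaAux_pos ν hν m
    have hfacpos : (0:ℝ) < (m.factorial : ℝ) := by exact_mod_cast m.factorial_pos
    have hfacpos2 : (0:ℝ) < ((2*m).factorial : ℝ) := by exact_mod_cast (2*m).factorial_pos
    have h4 : (0:ℝ) < 4 ^ m := by positivity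
    have hhalf : (x/2) ^ (2*m) = x ^ (2*m) / 4 ^ m := by
      rw [div_pow]; congr 1; rw [pow_mul]; norm_num
    show (1 / ((m.factorial : ℝ) * Real.Gamma ((m : ℝ) + ν + 1))) *
      (x / 2) ^ (2 * (m : ℝ) + ν) ≤ _
    rw [hrpow m, hhalf]
    have hk := key_ineq ν hν m
    have lhs_eq : 1 / ((m.factorial : ℝ) * Real.Gamma ((m : ℝ) + ν + 1)) * (x ^ (2*m) / 4 ^ m * (x/2)^ν)
        = (x ^ (2*m) * (x/2)^ν) / (4 ^ m * (m.factorial : ℝ) * Real.Gamma ((m : ℝ) + ν + 1)) := by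
      field_simp
    have rhs_eq : C * (x ^ (2*m) / ((2*m).factorial : ℝ))
        = (x ^ (2*m) * (x/2)^ν) / (((2*m).factorial : ℝ) * Real.Gamma (ν + 1)) := by
      rw [hC]; field_simp
    rw [lhs_eq, rhs_eq]
    apply div_le_div_of_nonneg_left _ (by positivity) _
    · positivity
    · linarith [key_ineq ν hν m]
  -- summability of the dominating series
  have hinj : Function.Injective (fun m : ℕ => 2*m) := fun a b h => by simp only [] at h; omega
  have hsumexp : Summable (fun n : ℕ => C * (x ^ n / (n.factorial : ℝ))) :=
    (Real.summable_pow_div_factorial x).mul_left C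
  have hsumg : Summable (fun m : ℕ => C * (x ^ (2*m) / ((2*m).factorial : ℝ))) :=
    hsumexp.comp_injective hinj
  have hsumf : Summable f :=
    Summable.of_nonneg_of_le (fun m => (hfpos m).le) hbound hsumg
  have hbessel : besselI ν x = ∑' m, f m := rfl
  constructor
  · -- lower bound
    have hf0 : f 0 = C := by
      show (1 / ((Nat.factorial 0 : ℝ) * Real.Gamma (((0:ℕ) : ℝ) + ν + 1))) *
        (x / 2) ^ (2 * ((0:ℕ) : ℝ) + ν) = C
      rw [hC]
      norm_num
      rw [inv_mul_eq_div]
    have h01 : f 0 + f 1 ≤ ∑' m, f m := by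
      have := Summable.sum_le_tsum (Finset.range 2) (fun m _ => (hfpos m).le) hsumf
      simpa [Finset.sum_range_succ] using this
    rw [hbessel, ← hf0]
    have := hfpos 1
    linarith
  · -- upper bound
    rw [hbessel]
    have h1 : ∑' m, f m ≤ ∑' m, C * (x ^ (2*m) / ((2*m).factorial : ℝ)) :=
      Summable.tsum_le_tsum hbound hsumf hsumg
    set F : ℕ → ℝ := fun n => if 2 ∣ n then C * (x ^ n / (n.factorial : ℝ)) else 0 with hF
    have hFeq : ∀ m : ℕ, F (2*m) = C * (x ^ (2*m) / ((2*m).factorial : ℝ)) := by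
      intro m; simp [hF]
    have hFsupp : Function.support F ⊆ Set.range (fun m : ℕ => 2*m) := by
      intro n hn
      by_contra hc
      apply hn
      have : ¬ (2 ∣ n) := by
        intro ⟨k, hk⟩; exact hc ⟨k, hk.symm⟩
      simp [hF, this]
    have h2 : ∑' m, C * (x ^ (2*m) / ((2*m).factorial : ℝ)) = ∑' n, F n := by
      rw [← tsum_congr hFeq]
      exact hinj.tsum_eq hFsupp
    have hFle : ∀ n, F n ≤ C * (x ^ n / (n.factorial : ℝ)) := by
      intro n
      by_cases h : 2 ∣ n
      · simp [hF, h]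
      · simp only [hF, if_neg h]
        positivity
    have hFnonneg : ∀ n, 0 ≤ F n := by
      intro n
      by_cases h : 2 ∣ n
      · simp only [hF, if_pos h]; positivity
      · simp [hF, h]
    have h3 : ∑' n, F n < ∑' n, C * (x ^ n / (n.factorial : ℝ)) := by
      have h1lt : F 1 < C * (x ^ 1 / (Nat.factorial 1 : ℝ)) := by
        have : F 1 = 0 := by simp [hF]
        rw [this]
        simp only [pow_one, Nat.factorial_one, Nat.cast_one, div_one]
        positivity
      exact Summable.tsum_lt_tsum_of_nonneg (i := 1) hFnonneg hFle h1lt hsumexp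
    have hexp : ∑' n : ℕ, C * (x ^ n / (n.factorial : ℝ)) = C * Real.exp x := by
      rw [tsum_mul_left]
      congr 1
      rw [Real.exp_eq_exp_ℝ, NormedSpace.exp_eq_tsum_div]
    have : C * Real.exp x = (x / 2) ^ ν * Real.exp x / Real.Gamma (ν + 1) := by
      rw [hC]; ring
    linarith [h1.trans_lt (h2 ▸ h3)]
end

section
/- For all x > 0 and ν > -1/2, the inequality e^{-x} < Γ(ν+1)(2/x)^ν e^{-x} I_ν(x) < (1 + e^{-2x})/2 holds, where I_ν is the modified Bessel function of the first kind. -/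
/-!
Multiplying by `Γ(ν + 1) (2 / x)^ν` turns `I_ν(x)` into the power series
`∑ Γ(ν + 1) / (m! Γ(m + ν + 1)) (x / 2)^(2m)`, whose constant term is `1`. Comparing it termwise
with `cosh x = ∑ x^(2m) / (2m)!` amounts to `(2m)! Γ(ν + 1) ≤ 4^m m! Γ(m + ν + 1)`; passing from
`m` to `m + 1` multiplies the left side by `(2m + 2)(2m + 1) = 4(m + 1)(m + 1/2)` and the right
side by `4(m + 1)(m + ν + 1)`, so the comparison holds, strictly for `m ≥ 1`, when `ν > -1/2`.
Hence `1 < Γ(ν + 1) (2 / x)^ν I_ν(x) < cosh x`, and `e^{-x} cosh x = (1 + e^{-2x}) / 2`.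
-/

open Real

open Nat

section FactorialGamma

variable {ν : ℝ}

lemma cast_factorial_two_mul_succ (n : ℕ) :
    ((2 * (n + 1))! : ℝ) = (2 * n + 2) * (2 * n + 1) * (2 * n)! := by
  rw [show 2 * (n + 1) = 2 * n + 1 + 1 by ring, factorial_succ, factorial_succ]
  push_cast
  ring

lemma four_pow_mul_factorial_mul_Gamma_succ (hν : -1 < ν) (n : ℕ) :
    4 ^ (n + 1) * ((n + 1)! : ℝ) * Gamma ((n + 1 : ℕ) + ν + 1) =
      4 * (n + 1) * (n + ν + 1) * (4 ^ n * n ! * Gamma (n + ν + 1)) := by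
  have hpos : (0 : ℝ) < n + ν + 1 := by linarith [n.cast_nonneg (α := ℝ)]
  rw [show ((n + 1 : ℕ) : ℝ) + ν + 1 = n + ν + 1 + 1 by push_cast; ring,
    Gamma_add_one hpos.ne', factorial_succ, pow_succ]
  push_cast
  ring

lemma four_pow_mul_factorial_mul_Gamma_pos (hν : -1 < ν) (n : ℕ) :
    0 < 4 ^ n * (n ! : ℝ) * Gamma (n + ν + 1) := by
  have := Gamma_pos_of_pos (show (0 : ℝ) < n + ν + 1 by linarith [n.cast_nonneg (α := ℝ)])
  positivity

theorem factorial_two_mul_mul_Gamma_le (hν : -1 / 2 ≤ ν) (m : ℕ) :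
    ((2 * m)! : ℝ) * Gamma (ν + 1) ≤ 4 ^ m * m ! * Gamma (m + ν + 1) := by
  induction m with
  | zero => simp
  | succ n ih =>
    rw [cast_factorial_two_mul_succ, four_pow_mul_factorial_mul_Gamma_succ (by linarith)]
    calc (2 * n + 2) * (2 * n + 1) * ((2 * n)! : ℝ) * Gamma (ν + 1)
        = (2 * n + 2) * (2 * n + 1) * (((2 * n)! : ℝ) * Gamma (ν + 1)) := by ring
      _ ≤ (2 * n + 2) * (2 * n + 1) * (4 ^ n * n ! * Gamma (n + ν + 1)) := by gcongr
      _ ≤ 4 * (n + 1) * (n + ν + 1) * (4 ^ n * n ! * Gamma (n + ν + 1)) := by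
        gcongr ?_ * _
        · exact (four_pow_mul_factorial_mul_Gamma_pos (by linarith) n).le
        · nlinarith [n.cast_nonneg (α := ℝ)]

theorem factorial_two_mul_mul_Gamma_lt (hν : -1 / 2 < ν) {m : ℕ} (hm : m ≠ 0) :
    ((2 * m)! : ℝ) * Gamma (ν + 1) < 4 ^ m * m ! * Gamma (m + ν + 1) := by
  obtain ⟨n, rfl⟩ := exists_eq_succ_of_ne_zero hm
  rw [cast_factorial_two_mul_succ, four_pow_mul_factorial_mul_Gamma_succ (by linarith)]
  calc (2 * n + 2) * (2 * n + 1) * ((2 * n)! : ℝ) * Gamma (ν + 1)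
      = (2 * n + 2) * (2 * n + 1) * (((2 * n)! : ℝ) * Gamma (ν + 1)) := by ring
    _ ≤ (2 * n + 2) * (2 * n + 1) * (4 ^ n * n ! * Gamma (n + ν + 1)) := by
      have := factorial_two_mul_mul_Gamma_le hν.le n
      gcongr
    _ < 4 * (n + 1) * (n + ν + 1) * (4 ^ n * n ! * Gamma (n + ν + 1)) := by
      refine mul_lt_mul_of_pos_right ?_ (four_pow_mul_factorial_mul_Gamma_pos (by linarith) n)
      nlinarith [n.cast_nonneg (α := ℝ)]

end FactorialGamma

section NormalizedSeries

variable {ν : ℝ}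

noncomputable def normalizedBesselITerm (ν x : ℝ) (m : ℕ) : ℝ :=
  Gamma (ν + 1) / (m ! * Gamma (m + ν + 1)) * (x / 2) ^ (2 * m)

lemma tsum_normalizedBesselITerm {x : ℝ} (hx : 0 < x) :
    ∑' m, normalizedBesselITerm ν x m = Gamma (ν + 1) * (2 / x) ^ ν * besselI ν x := by
  have hinv : (2 / x) ^ ν * (x / 2) ^ ν = 1 := by
    rw [← mul_rpow (by positivity) (by positivity), show 2 / x * (x / 2) = 1 by field_simp,
      one_rpow]
  rw [besselI, ← tsum_mul_left]
  refine tsum_congr fun m => ?_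
  rw [rpow_add (by positivity), show 2 * (m : ℝ) = (2 * m : ℕ) by push_cast; ring, rpow_natCast,
    normalizedBesselITerm]
  linear_combination -(Gamma (ν + 1) / (m ! * Gamma (m + ν + 1)) * (x / 2) ^ (2 * m)) * hinv

lemma normalizedBesselITerm_zero (hν : -1 < ν) (x : ℝ) : normalizedBesselITerm ν x 0 = 1 := by
  have := Gamma_pos_of_pos (show 0 < ν + 1 by linarith)
  simp [normalizedBesselITerm, this.ne']

lemma normalizedBesselITerm_nonneg (hν : -1 < ν) (x : ℝ) (m : ℕ) :
    0 ≤ normalizedBesselITerm ν x m := by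
  have := Gamma_pos_of_pos (show 0 < ν + 1 by linarith)
  have := Gamma_pos_of_pos (show (0 : ℝ) < m + ν + 1 by linarith [m.cast_nonneg (α := ℝ)])
  rw [normalizedBesselITerm, pow_mul]
  positivity

lemma normalizedBesselITerm_pos (hν : -1 < ν) {x : ℝ} (hx : x ≠ 0) (m : ℕ) :
    0 < normalizedBesselITerm ν x m := by
  have := Gamma_pos_of_pos (show 0 < ν + 1 by linarith)
  have := Gamma_pos_of_pos (show (0 : ℝ) < m + ν + 1 by linarith [m.cast_nonneg (α := ℝ)])
  have : 0 < (x / 2) ^ (2 * m) := by rw [pow_mul]; positivity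
  rw [normalizedBesselITerm]
  positivity

lemma normalizedBesselITerm_eq_mul (ν x : ℝ) (m : ℕ) :
    normalizedBesselITerm ν x m =
      (2 * m)! * Gamma (ν + 1) / (4 ^ m * m ! * Gamma (m + ν + 1)) * (x ^ (2 * m) / (2 * m)!) := by
  have : ((2 * m)! : ℝ) ≠ 0 := by positivity
  rw [normalizedBesselITerm, div_pow, pow_mul 2, show (2 : ℝ) ^ 2 = 4 by norm_num]
  field_simp

lemma normalizedBesselITerm_le (hν : -1 / 2 ≤ ν) (x : ℝ) (m : ℕ) :
    normalizedBesselITerm ν x m ≤ x ^ (2 * m) / (2 * m)! := by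
  rw [normalizedBesselITerm_eq_mul, pow_mul]
  refine mul_le_of_le_one_left (by positivity) (div_le_one_of_le₀ ?_ ?_)
  · exact factorial_two_mul_mul_Gamma_le hν m
  · exact (four_pow_mul_factorial_mul_Gamma_pos (by linarith) m).le

lemma normalizedBesselITerm_lt (hν : -1 / 2 < ν) {x : ℝ} (hx : x ≠ 0) {m : ℕ} (hm : m ≠ 0) :
    normalizedBesselITerm ν x m < x ^ (2 * m) / (2 * m)! := by
  rw [normalizedBesselITerm_eq_mul, pow_mul]
  refine mul_lt_of_lt_one_left (by positivity) ((div_lt_one ?_).2 ?_)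
  · exact four_pow_mul_factorial_mul_Gamma_pos (by linarith) m
  · exact factorial_two_mul_mul_Gamma_lt hν hm

lemma summable_normalizedBesselITerm (hν : -1 / 2 ≤ ν) (x : ℝ) :
    Summable (normalizedBesselITerm ν x) :=
  (hasSum_cosh x).summable.of_nonneg_of_le (normalizedBesselITerm_nonneg (by linarith) x)
    (normalizedBesselITerm_le hν x)

lemma one_lt_tsum_normalizedBesselITerm (hν : -1 / 2 ≤ ν) {x : ℝ} (hx : x ≠ 0) :
    1 < ∑' m, normalizedBesselITerm ν x m := by
  have hν' : -1 < ν := by linarith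
  calc (1 : ℝ) < ∑ m ∈ Finset.range 2, normalizedBesselITerm ν x m := by
        rw [Finset.sum_range_succ, Finset.sum_range_one, normalizedBesselITerm_zero hν']
        linarith [normalizedBesselITerm_pos hν' hx 1]
    _ ≤ ∑' m, normalizedBesselITerm ν x m :=
        (summable_normalizedBesselITerm hν x).sum_le_tsum _
          fun m _ => normalizedBesselITerm_nonneg hν' x m

lemma tsum_normalizedBesselITerm_lt_cosh (hν : -1 / 2 < ν) {x : ℝ} (hx : x ≠ 0) :
    ∑' m, normalizedBesselITerm ν x m < cosh x := by
  rw [cosh_eq_tsum]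
  exact (summable_normalizedBesselITerm hν.le x).tsum_lt_tsum (normalizedBesselITerm_le hν.le x)
    (normalizedBesselITerm_lt hν hx one_ne_zero) (hasSum_cosh x).summable

end NormalizedSeries

lemma exp_neg_mul_cosh (x : ℝ) : exp (-x) * cosh x = (1 + exp (-2 * x)) / 2 := by
  rw [cosh_eq, mul_div_assoc', mul_add, ← exp_add, ← exp_add, neg_add_cancel, exp_zero]
  ring_nf

theorem besselI_luke_inequality (x ν : ℝ) (hx : 0 < x) (hν : -1/2 < ν) :
    Real.exp (-x) < Real.Gamma (ν + 1) * (2 / x) ^ ν * Real.exp (-x) * besselI ν x ∧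
    Real.Gamma (ν + 1) * (2 / x) ^ ν * Real.exp (-x) * besselI ν x <
      (1 + Real.exp (-2 * x)) / 2 := by
  have hseries : Gamma (ν + 1) * (2 / x) ^ ν * exp (-x) * besselI ν x =
      exp (-x) * ∑' m, normalizedBesselITerm ν x m := by
    rw [tsum_normalizedBesselITerm hx]
    ring
  rw [hseries]
  constructor
  · exact lt_mul_of_one_lt_right (exp_pos _) (one_lt_tsum_normalizedBesselITerm hν.le hx.ne')
  · rw [← exp_neg_mul_cosh]
    exact mul_lt_mul_of_pos_left (tsum_normalizedBesselITerm_lt_cosh hν hx.ne') (exp_pos _)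
end

section
/- Let k > 1 and λ > 0, and let f_{k,λ}(x) = (1/2) e^{-(x+λ)/2} (x/λ)^{k/4 - 1/2} I_{k/2-1}(sqrt(λx)) for x > 0 be the PDF of the noncentral chi-squared distribution. Then for all x > 0: (1/2^{k/2}) e^{-(x+λ)/2} x^{k/2-1} / Γ(k/2) ≤ f_{k,λ}(x) ≤ (1/2^{k/2}) e^{-x/4 + λ/2} x^{k/2-1} / Γ(k/2). -/
open Real MeasureTheory Set Filter

/-- PDF of the noncentral chi-squared distribution with `k` degrees of freedom and
noncentrality parameter `lam`, for `x > 0`. -/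
noncomputable def ncChiSqPDF (k lam x : ℝ) : ℝ :=
  (1 / 2) * Real.exp (-(x + lam) / 2) * (x / lam) ^ (k / 4 - 1 / 2) *
    besselI (k / 2 - 1) (Real.sqrt (lam * x))

/-- PDF of the central chi-squared distribution with `k` degrees of freedom, for `x > 0`. -/
noncomputable def chiSqPDF (k x : ℝ) : ℝ :=
  x ^ (k / 2 - 1) * Real.exp (-x / 2) / (2 ^ (k / 2) * Real.Gamma (k / 2))

/-!
For `ν ≥ -1/2` the Pochhammer ratio `Γ(m + ν + 1) / Γ(ν + 1) = (ν + 1)ₘ` dominates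
`(1/2)ₘ = (2m)! / (4^m m!)`, so the `m`-th term of the series of `I_ν(y)` is at most
`(y/2)^ν / Γ(ν + 1) · y^{2m} / (2m)!`. Keeping only the `m = 0` term and summing these bounds give
`(y/2)^ν / Γ(ν + 1) ≤ I_ν(y) ≤ (y/2)^ν / Γ(ν + 1) · cosh y`. With `y = √(λx)` the prefactor of the
density turns `(y/2)^ν / Γ(ν + 1)` into the central chi-squared density times `e^{-λ/2}`, and the
upper bound follows from `cosh y ≤ e^y` and AM-GM, `√(λx) ≤ x/4 + λ`.
-/

open scoped Nat

lemma Gamma_add_one_mul_factorial_two_mul_le {ν : ℝ} (hν : -(1 / 2) ≤ ν) (m : ℕ) :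
    Gamma (ν + 1) * (2 * m)! ≤ 4 ^ m * m ! * Gamma (m + ν + 1) := by
  induction m with
  | zero => simp
  | succ m ih =>
    have hpos : 0 < (m : ℝ) + ν + 1 := by linarith [(m.cast_nonneg : (0 : ℝ) ≤ m)]
    have hfact : ((2 * (m + 1))! : ℝ) = (2 * m + 2) * (2 * m + 1) * (2 * m)! := by
      rw [show 2 * (m + 1) = 2 * m + 1 + 1 by ring, Nat.factorial_succ, Nat.factorial_succ]
      push_cast; ring
    calc Gamma (ν + 1) * (2 * (m + 1))!
        = (2 * m + 2) * (2 * m + 1) * (Gamma (ν + 1) * (2 * m)!) := by rw [hfact]; ring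
      _ ≤ (2 * m + 2) * (2 * m + 1) * (4 ^ m * m ! * Gamma (m + ν + 1)) := by gcongr
      _ = 4 ^ (m + 1) * (m + 1)! * ((m + 1 / 2) * Gamma (m + ν + 1)) := by
          push_cast [Nat.factorial_succ]; ring
      _ ≤ 4 ^ (m + 1) * (m + 1)! * ((m + ν + 1) * Gamma (m + ν + 1)) := by
          gcongr _ * ?_
          exact mul_le_mul_of_nonneg_right (by linarith) (Gamma_pos_of_pos hpos).le
      _ = 4 ^ (m + 1) * (m + 1)! * Gamma (↑(m + 1) + ν + 1) := by
          rw [← Gamma_add_one hpos.ne']; push_cast; ring_nf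

noncomputable def besselITerm (ν x : ℝ) (m : ℕ) : ℝ :=
  (1 / ((m ! : ℝ) * Gamma ((m : ℝ) + ν + 1))) * (x / 2) ^ (2 * (m : ℝ) + ν)

lemma besselI_eq_tsum (ν x : ℝ) : besselI ν x = ∑' m, besselITerm ν x m := rfl

lemma besselITerm_zero (ν x : ℝ) : besselITerm ν x 0 = (x / 2) ^ ν / Gamma (ν + 1) := by
  simp [besselITerm, div_eq_inv_mul]

lemma besselITerm_nonneg {ν x : ℝ} (hν : -1 < ν) (hx : 0 ≤ x) (m : ℕ) :
    0 ≤ besselITerm ν x m := by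
  have := Gamma_pos_of_pos (by linarith [(m.cast_nonneg : (0 : ℝ) ≤ m)] : 0 < (m : ℝ) + ν + 1)
  unfold besselITerm
  positivity

lemma besselITerm_eq {ν x : ℝ} (hx : 0 < x) (m : ℕ) :
    besselITerm ν x m = (x / 2) ^ ν * x ^ (2 * m) / (4 ^ m * m ! * Gamma (m + ν + 1)) := by
  rw [besselITerm, rpow_add (by positivity), show 2 * (m : ℝ) = (2 * m : ℕ) by push_cast; ring,
    rpow_natCast, div_pow, pow_mul 2]
  ring

lemma besselITerm_le {ν x : ℝ} (hν : -(1 / 2) ≤ ν) (hx : 0 < x) (m : ℕ) :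
    besselITerm ν x m ≤ (x / 2) ^ ν / Gamma (ν + 1) * (x ^ (2 * m) / (2 * m)!) := by
  have hΓ := Gamma_pos_of_pos (by linarith : 0 < ν + 1)
  have hΓm := Gamma_pos_of_pos (by linarith [(m.cast_nonneg : (0 : ℝ) ≤ m)] : 0 < (m : ℝ) + ν + 1)
  rw [besselITerm_eq hx, div_mul_div_comm]
  exact div_le_div_of_nonneg_left (by positivity) (by positivity)
    (Gamma_add_one_mul_factorial_two_mul_le hν m)

lemma summable_besselITerm {ν x : ℝ} (hν : -(1 / 2) ≤ ν) (hx : 0 < x) :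
    Summable (besselITerm ν x) :=
  .of_nonneg_of_le (besselITerm_nonneg (by linarith) hx.le) (besselITerm_le hν hx)
    ((hasSum_cosh x).summable.mul_left _)

lemma rpow_div_Gamma_le_besselI {ν x : ℝ} (hν : -(1 / 2) ≤ ν) (hx : 0 < x) :
    (x / 2) ^ ν / Gamma (ν + 1) ≤ besselI ν x := by
  rw [← besselITerm_zero, besselI_eq_tsum]
  exact (summable_besselITerm hν hx).le_tsum 0 fun m _ ↦ besselITerm_nonneg (by linarith) hx.le m

lemma besselI_le_rpow_div_Gamma_mul_cosh {ν x : ℝ} (hν : -(1 / 2) ≤ ν) (hx : 0 < x) :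
    besselI ν x ≤ (x / 2) ^ ν / Gamma (ν + 1) * cosh x := by
  rw [besselI_eq_tsum, ← ((hasSum_cosh x).mul_left _).tsum_eq]
  exact (summable_besselITerm hν hx).tsum_le_tsum (besselITerm_le hν hx)
    ((hasSum_cosh x).summable.mul_left _)

lemma div_rpow_half_mul_sqrt_mul_div_two_rpow {x a : ℝ} (hx : 0 ≤ x) (ha : 0 < a) (ν : ℝ) :
    (x / a) ^ (ν / 2) * (√(a * x) / 2) ^ ν = (x / 2) ^ ν := by
  have hroot : √(x / a) * (√(a * x) / 2) = x / 2 := by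
    rw [← mul_div_assoc, ← sqrt_mul (by positivity), show x / a * (a * x) = x * x by field_simp,
      sqrt_mul_self hx]
  rw [div_eq_mul_inv ν, mul_comm ν, rpow_mul (by positivity), ← one_div, ← sqrt_eq_rpow,
    ← mul_rpow (by positivity) (by positivity), hroot]

lemma exp_mul_cosh_sqrt_mul_le {x a : ℝ} (hx : 0 ≤ x) (ha : 0 ≤ a) :
    exp (-(x + a) / 2) * cosh √(a * x) ≤ exp (-x / 4 + a / 2) := by
  have hcosh : cosh √(a * x) ≤ exp √(a * x) := by
    rw [← cosh_add_sinh]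
    exact le_add_of_nonneg_right (sinh_nonneg_iff.2 (sqrt_nonneg _))
  have hamgm : √(a * x) ≤ x / 4 + a :=
    (sqrt_le_left (by positivity)).2 (by nlinarith [sq_nonneg (x / 4 - a)])
  calc exp (-(x + a) / 2) * cosh √(a * x) ≤ exp (-(x + a) / 2) * exp √(a * x) := by gcongr
    _ ≤ exp (-x / 4 + a / 2) := by rw [← exp_add]; exact exp_le_exp.2 (by linarith)

lemma half_mul_div_rpow_mul_besselI_leading_term {k a x : ℝ} (hx : 0 < x) (ha : 0 < a)
    (e c : ℝ) :
    1 / 2 * e * (x / a) ^ (k / 4 - 1 / 2) *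
        ((√(a * x) / 2) ^ (k / 2 - 1) / Gamma (k / 2 - 1 + 1) * c) =
      1 / 2 ^ (k / 2) * (e * c) * x ^ (k / 2 - 1) / Gamma (k / 2) := by
  have hroot := div_rpow_half_mul_sqrt_mul_div_two_rpow hx.le ha (k / 2 - 1)
  rw [div_rpow hx.le zero_le_two, show (k / 2 - 1) / 2 = k / 4 - 1 / 2 by ring] at hroot
  have htwo : (2 : ℝ) ^ (k / 2) = 2 ^ (k / 2 - 1) * 2 := by
    rw [← rpow_add_one two_ne_zero, sub_add_cancel]
  have : 0 < (2 : ℝ) ^ (k / 2 - 1) := by positivity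
  calc _ = 1 / 2 * e * ((x / a) ^ (k / 4 - 1 / 2) * (√(a * x) / 2) ^ (k / 2 - 1)) /
        Gamma (k / 2 - 1 + 1) * c := by ring
    _ = _ := by rw [hroot, sub_add_cancel, htwo]; field_simp

theorem ncChiSqPDF_bounds (k lam : ℝ) (hk : 1 < k) (hlam : 0 < lam) :
    ∀ x : ℝ, 0 < x →
      (1 / 2 ^ (k / 2)) * Real.exp (-(x + lam) / 2) * x ^ (k / 2 - 1) / Real.Gamma (k / 2)
        ≤ ncChiSqPDF k lam x ∧
      ncChiSqPDF k lam x ≤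
        (1 / 2 ^ (k / 2)) * Real.exp (-x / 4 + lam / 2) * x ^ (k / 2 - 1) /
          Real.Gamma (k / 2) := by
  intro x hx
  have hν : -(1 / 2) ≤ k / 2 - 1 := by linarith
  have hy : 0 < √(lam * x) := sqrt_pos.2 (mul_pos hlam hx)
  have hprefactor : 0 ≤ 1 / 2 * exp (-(x + lam) / 2) * (x / lam) ^ (k / 4 - 1 / 2) := by
    positivity
  constructor
  · calc _ = 1 / 2 * exp (-(x + lam) / 2) * (x / lam) ^ (k / 4 - 1 / 2) *
          ((√(lam * x) / 2) ^ (k / 2 - 1) / Gamma (k / 2 - 1 + 1) * 1) := by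
          rw [half_mul_div_rpow_mul_besselI_leading_term hx hlam, mul_one]
      _ ≤ ncChiSqPDF k lam x := by
          rw [mul_one]
          exact mul_le_mul_of_nonneg_left (rpow_div_Gamma_le_besselI hν hy) hprefactor
  · calc ncChiSqPDF k lam x ≤ 1 / 2 * exp (-(x + lam) / 2) * (x / lam) ^ (k / 4 - 1 / 2) *
          ((√(lam * x) / 2) ^ (k / 2 - 1) / Gamma (k / 2 - 1 + 1) * cosh √(lam * x)) :=
          mul_le_mul_of_nonneg_left (besselI_le_rpow_div_Gamma_mul_cosh hν hy) hprefactor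
      _ = 1 / 2 ^ (k / 2) * (exp (-(x + lam) / 2) * cosh √(lam * x)) * x ^ (k / 2 - 1) /
          Gamma (k / 2) := half_mul_div_rpow_mul_besselI_leading_term hx hlam _ _
      _ ≤ _ := by
          have := Gamma_pos_of_pos (by linarith : 0 < k / 2)
          gcongr
          exact exp_mul_cosh_sqrt_mul_le hx.le hlam.le
end

section
/- Let α > 0, k > 1, λ > 0. The integral ∫_0^∞ f_{k,λ}^α(x) dx, where f_{k,λ} is the PDF of the noncentral chi-squared distribution with k degrees of freedom and noncentrality parameter λ, is finite if and only if k > 2 - 2/α. -/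
open Real MeasureTheory Set Filter

/-! With `ν = k/2 - 1` and `S(u) = ∑ uᵐ / (m! Γ(m + ν + 1))`, the series defining `I_ν`
gives `f_{k,λ}(x) = x^ν e^{-(x+λ)/2} 2^{-k/2} S(λx/4)`. The series `S` lies between its
constant term `1/Γ(ν+1)` and `e^{2√(2u)}/Γ(ν+1)`, and `2√(λx/2) ≤ x/4 + 2λ`, so
`e^{-λ/2} χ²_k(x) ≤ f_{k,λ}(x) ≤ e^{3λ/2} e^{x/4} χ²_k(x)`.
Both bounds decay exponentially at infinity and behave like `x^ν` at `0`, so `f_{k,λ}^α` is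
integrable exactly when `x^{αν}` is integrable near `0`, i.e. when `αν > -1`. -/

open scoped Nat

theorem measurable_tsum_of_summable {X E : Type*} [MeasurableSpace X] [TopologicalSpace E]
    [AddCommMonoid E] [TopologicalSpace.PseudoMetrizableSpace E] [MeasurableSpace E]
    [BorelSpace E] [MeasurableAdd₂ E] {f : ℕ → X → E} (hf : ∀ m, Measurable (f m))
    (hs : ∀ x, Summable fun m => f m x) : Measurable fun x => ∑' m, f m x :=
  measurable_of_tendsto_metrizable' atTop
    (fun n => Finset.measurable_sum (Finset.range n) fun m _ => hf m)
    (tendsto_pi_nhds.2 fun x => (hs x).hasSum.tendsto_sum_nat)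

theorem MeasureTheory.IntegrableOn.rpow_of_le_const_mul {X : Type*} [MeasurableSpace X]
    {μ : Measure X} {s : Set X} {f g : X → ℝ} {C α : ℝ}
    (hg : IntegrableOn (fun x => g x ^ α) s μ) (hC : 0 < C) (hα : 0 ≤ α)
    (hs : MeasurableSet s) (hf : AEStronglyMeasurable f (μ.restrict s))
    (hf0 : ∀ x ∈ s, 0 ≤ f x) (hfg : ∀ x ∈ s, f x ≤ C * g x) :
    IntegrableOn (fun x => f x ^ α) s μ := by
  refine (hg.const_mul (C ^ α)).mono' (hf.aemeasurable.pow_const α).aestronglyMeasurable ?_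
  filter_upwards [ae_restrict_mem hs] with x hx
  have hg0 : 0 ≤ g x := nonneg_of_mul_nonneg_right ((hf0 x hx).trans (hfg x hx)) hC
  rw [norm_of_nonneg (rpow_nonneg (hf0 x hx) α), ← mul_rpow hC.le hg0]
  exact rpow_le_rpow (hf0 x hx) (hfg x hx) hα

theorem integrableOn_rpow_mul_exp_neg_mul_iff {s c : ℝ} (hc : 0 < c) :
    IntegrableOn (fun x => x ^ s * exp (-c * x)) (Ioi 0) ↔ -1 < s := by
  refine ⟨fun h => (intervalIntegral.integrableOn_Ioo_rpow_iff one_pos).1 ?_,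
    fun hs => by simpa using integrableOn_rpow_mul_exp_neg_mul_rpow hs one_pos hc⟩
  refine ((h.mono_set Ioo_subset_Ioi_self).const_mul (exp c)).mono'
    (by fun_prop : Measurable fun x : ℝ => x ^ s).aestronglyMeasurable ?_
  filter_upwards [ae_restrict_mem measurableSet_Ioo] with x ⟨hx0, hx1⟩
  have hexp : 1 ≤ exp c * exp (-c * x) := by
    rw [← exp_add, one_le_exp_iff]
    nlinarith
  rw [norm_of_nonneg (rpow_nonneg hx0.le s)]
  nlinarith [rpow_nonneg hx0.le s]

theorem Gamma_add_one_mul_factorial_le {ν : ℝ} (hν : -1 / 2 ≤ ν) (m : ℕ) :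
    Gamma (ν + 1) * m ! ≤ 2 ^ m * Gamma (m + ν + 1) := by
  induction m with
  | zero => simp
  | succ n ih =>
    have hn : (0 : ℝ) ≤ n := n.cast_nonneg
    have hpos : 0 < (n : ℝ) + ν + 1 := by linarith
    have hG : 0 ≤ Gamma (ν + 1) * n ! := by
      have := Gamma_pos_of_pos (show 0 < ν + 1 by linarith)
      positivity
    calc Gamma (ν + 1) * (n + 1)! = (n + 1) * (Gamma (ν + 1) * n !) := by
          push_cast [Nat.factorial_succ]; ring
      _ ≤ (2 * (n + ν + 1)) * (2 ^ n * Gamma (n + ν + 1)) :=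
          mul_le_mul (by linarith) ih hG (by linarith)
      _ = 2 ^ (n + 1) * Gamma ((n + 1 : ℕ) + ν + 1) := by
          rw [show ((n + 1 : ℕ) : ℝ) + ν + 1 = (n + ν + 1) + 1 by push_cast; ring,
            Gamma_add_one hpos.ne']
          ring

noncomputable def besselSeries (ν u : ℝ) : ℝ :=
  ∑' m : ℕ, u ^ m / (m ! * Gamma (m + ν + 1))

section BesselSeries

variable {ν : ℝ}

theorem Gamma_nat_add_add_one_pos (hν : -1 < ν) (m : ℕ) : 0 < Gamma (m + ν + 1) :=
  Gamma_pos_of_pos (by linarith [m.cast_nonneg (α := ℝ)])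

theorem besselSeries_term_le (hν : -1 / 2 ≤ ν) {u : ℝ} (hu : 0 ≤ u) (m : ℕ) :
    u ^ m / (m ! * Gamma (m + ν + 1)) ≤ (2 * u) ^ m / (m !) ^ 2 / Gamma (ν + 1) := by
  have hG := Gamma_nat_add_add_one_pos (ν := ν) (by linarith) m
  have hG₀ := Gamma_pos_of_pos (show 0 < ν + 1 by linarith)
  rw [div_div, div_le_div_iff₀ (mul_pos (by positivity) hG) (mul_pos (by positivity) hG₀),
    mul_pow]
  calc u ^ m * ((m !) ^ 2 * Gamma (ν + 1)) = u ^ m * m ! * (Gamma (ν + 1) * m !) := by ring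
    _ ≤ u ^ m * m ! * (2 ^ m * Gamma (m + ν + 1)) :=
        mul_le_mul_of_nonneg_left (Gamma_add_one_mul_factorial_le hν m) (by positivity)
    _ = 2 ^ m * u ^ m * (m ! * Gamma (m + ν + 1)) := by ring

theorem summable_besselSeries (hν : -1 / 2 ≤ ν) (u : ℝ) :
    Summable fun m : ℕ => u ^ m / (m ! * Gamma (m + ν + 1)) := by
  refine .of_norm_bounded ((summable_pow_div_factorial (2 * |u|)).div_const (Gamma (ν + 1)))
    fun m => ?_
  have := Gamma_nat_add_add_one_pos (ν := ν) (by linarith) m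
  have := Gamma_pos_of_pos (show 0 < ν + 1 by linarith)
  have hfac : (1 : ℝ) ≤ m ! := by exact_mod_cast m.factorial_pos
  rw [norm_div, norm_pow, norm_of_nonneg (by positivity : (0 : ℝ) ≤ m ! * Gamma (m + ν + 1))]
  refine (besselSeries_term_le hν (abs_nonneg u) m).trans ?_
  gcongr
  exact le_self_pow₀ hfac two_ne_zero

theorem inv_Gamma_le_besselSeries (hν : -1 / 2 ≤ ν) {u : ℝ} (hu : 0 ≤ u) :
    (Gamma (ν + 1))⁻¹ ≤ besselSeries ν u := by
  have hterm := (summable_besselSeries hν u).le_tsum 0 fun m _ =>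
    div_nonneg (pow_nonneg hu m) (mul_pos (by positivity)
      (Gamma_nat_add_add_one_pos (ν := ν) (by linarith) m)).le
  simpa [besselSeries] using hterm

theorem besselSeries_le (hν : -1 / 2 ≤ ν) {u : ℝ} (hu : 0 ≤ u) :
    besselSeries ν u ≤ exp (2 * √(2 * u)) / Gamma (ν + 1) := by
  set b := √(2 * u)
  have hb : 0 ≤ b := sqrt_nonneg _
  have := Gamma_pos_of_pos (show 0 < ν + 1 by linarith)
  have hterm (m : ℕ) :
      u ^ m / (m ! * Gamma (m + ν + 1)) ≤ exp b / Gamma (ν + 1) * (b ^ m / m !) := by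
    calc u ^ m / (m ! * Gamma (m + ν + 1)) ≤ (2 * u) ^ m / (m !) ^ 2 / Gamma (ν + 1) :=
          besselSeries_term_le hν hu m
      _ = b ^ m / m ! * (b ^ m / m !) / Gamma (ν + 1) := by
          rw [← sq_sqrt (by positivity : 0 ≤ 2 * u)]; ring
      _ ≤ b ^ m / m ! * exp b / Gamma (ν + 1) := by
          gcongr; exact pow_div_factorial_le_exp b hb m
      _ = exp b / Gamma (ν + 1) * (b ^ m / m !) := by ring
  calc besselSeries ν u ≤ ∑' m : ℕ, exp b / Gamma (ν + 1) * (b ^ m / m !) :=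
        (summable_besselSeries hν u).tsum_le_tsum hterm
          ((summable_pow_div_factorial b).mul_left _)
    _ = exp b / Gamma (ν + 1) * exp b := by
        rw [tsum_mul_left, exp_eq_exp_ℝ, NormedSpace.exp_eq_tsum_div]
    _ = exp (2 * b) / Gamma (ν + 1) := by rw [two_mul, exp_add]; ring

theorem measurable_besselSeries (hν : -1 / 2 ≤ ν) : Measurable (besselSeries ν) :=
  measurable_tsum_of_summable (fun _ => by fun_prop) (summable_besselSeries hν)

theorem besselI_eq_rpow_mul_besselSeries {t : ℝ} (ht : 0 < t) :
    besselI ν t = (t / 2) ^ ν * besselSeries ν ((t / 2) ^ 2) := by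
  rw [besselI, besselSeries, ← tsum_mul_left]
  refine tsum_congr fun m => ?_
  rw [rpow_add (by positivity), show 2 * (m : ℝ) = ((2 * m : ℕ) : ℝ) by push_cast; ring,
    rpow_natCast, pow_mul]
  ring

end BesselSeries

theorem chiSqPDF_nonneg {k x : ℝ} (hk : 0 < k) (hx : 0 ≤ x) : 0 ≤ chiSqPDF k x := by
  have := Gamma_pos_of_pos (half_pos hk)
  unfold chiSqPDF
  positivity

theorem integrableOn_rpow_exp_mul_chiSqPDF_iff {k α b : ℝ} (hk : 0 < k) (hα : 0 < α)
    (hb : b < 1 / 2) :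
    IntegrableOn (fun x => (exp (b * x) * chiSqPDF k x) ^ α) (Ioi 0) ↔
      -1 < α * (k / 2 - 1) := by
  set D := 2 ^ (k / 2) * Gamma (k / 2)
  have hD : 0 < D := mul_pos (by positivity) (Gamma_pos_of_pos (half_pos hk))
  have heq : EqOn (fun x => (exp (b * x) * chiSqPDF k x) ^ α)
      (fun x => (D ^ α)⁻¹ * (x ^ (α * (k / 2 - 1)) * exp (-(α * (1 / 2 - b)) * x)))
      (Ioi 0) := by
    intro x hx
    have hx : 0 < x := hx
    simp only [chiSqPDF]
    rw [show exp (b * x) * (x ^ (k / 2 - 1) * exp (-x / 2) / D)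
        = x ^ (k / 2 - 1) * exp (-(1 / 2 - b) * x) / D by
          rw [mul_div_assoc', mul_left_comm, ← exp_add]; ring_nf,
      div_rpow (by positivity) hD.le, mul_rpow (by positivity) (exp_pos _).le,
      ← rpow_mul hx.le, ← exp_mul, mul_comm (k / 2 - 1) α]
    ring_nf
  rw [integrableOn_congr_fun heq measurableSet_Ioi, IntegrableOn,
    integrable_const_mul_iff (inv_pos.2 (rpow_pos_of_pos hD α)).ne'.isUnit, ← IntegrableOn,
    integrableOn_rpow_mul_exp_neg_mul_iff (mul_pos hα (by linarith))]

section NcChiSq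

variable {k lam x : ℝ}

theorem ncChiSqPDF_eq (hlam : 0 < lam) (hx : 0 < x) :
    ncChiSqPDF k lam x =
      x ^ (k / 2 - 1) * exp (-(x + lam) / 2) / 2 ^ (k / 2) *
        besselSeries (k / 2 - 1) (lam * x / 4) := by
  have hlx : 0 < lam * x := by positivity
  have hsq : (√(lam * x) / 2) ^ 2 = lam * x / 4 := by
    rw [div_pow, sq_sqrt hlx.le]; norm_num
  have hpow :
      (√(lam * x) / 2) ^ (k / 2 - 1) = (lam * x) ^ ((k / 2 - 1) / 2) / 2 ^ (k / 2 - 1) := by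
    rw [div_rpow (sqrt_nonneg _) zero_le_two, sqrt_eq_rpow, ← rpow_mul hlx.le]
    ring_nf
  have hx_pow :
      (x / lam) ^ (k / 4 - 1 / 2) * (lam * x) ^ ((k / 2 - 1) / 2) = x ^ (k / 2 - 1) := by
    rw [show k / 4 - 1 / 2 = (k / 2 - 1) / 2 by ring, ← mul_rpow (by positivity) hlx.le,
      show x / lam * (lam * x) = x ^ (2 : ℝ) by rw [rpow_two]; field_simp, ← rpow_mul hx.le]
    ring_nf
  have htwo : (2 : ℝ) ^ (k / 2) = 2 * 2 ^ (k / 2 - 1) := by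
    simpa using rpow_add two_pos 1 (k / 2 - 1)
  rw [ncChiSqPDF, besselI_eq_rpow_mul_besselSeries (sqrt_pos.2 hlx), hsq, hpow, htwo, ← hx_pow]
  field_simp

theorem chiSqPDF_le_exp_mul_ncChiSqPDF (hk : 1 < k) (hlam : 0 < lam) (hx : 0 < x) :
    chiSqPDF k x ≤ exp (lam / 2) * ncChiSqPDF k lam x := by
  have hS := inv_Gamma_le_besselSeries (ν := k / 2 - 1) (u := lam * x / 4) (by linarith)
    (by positivity)
  rw [sub_add_cancel] at hS
  rw [ncChiSqPDF_eq hlam hx, chiSqPDF, ← mul_assoc]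
  calc x ^ (k / 2 - 1) * exp (-x / 2) / (2 ^ (k / 2) * Gamma (k / 2))
      = exp (lam / 2) * (x ^ (k / 2 - 1) * exp (-(x + lam) / 2) / 2 ^ (k / 2)) *
          (Gamma (k / 2))⁻¹ := by
        rw [show -x / 2 = lam / 2 + -(x + lam) / 2 by ring, exp_add]
        field_simp
    _ ≤ _ := by gcongr

theorem ncChiSqPDF_le_exp_mul_chiSqPDF (hk : 1 < k) (hlam : 0 < lam) (hx : 0 < x) :
    ncChiSqPDF k lam x ≤ exp (3 * lam / 2) * (exp (x / 4) * chiSqPDF k x) := by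
  have hS := besselSeries_le (ν := k / 2 - 1) (u := lam * x / 4) (by linarith) (by positivity)
  rw [sub_add_cancel] at hS
  have hamgm : 2 * √(2 * (lam * x / 4)) ≤ x / 4 + 2 * lam := by
    have hs := sq_sqrt (show 0 ≤ 2 * (lam * x / 4) by positivity)
    nlinarith [sqrt_nonneg (2 * (lam * x / 4)), sq_nonneg (x / 4 - 2 * lam)]
  rw [ncChiSqPDF_eq hlam hx, chiSqPDF]
  calc _ ≤ x ^ (k / 2 - 1) * exp (-(x + lam) / 2) / 2 ^ (k / 2) *
        (exp (x / 4 + 2 * lam) / Gamma (k / 2)) := by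
        gcongr
        exact hS.trans (by gcongr)
    _ = _ := by
        rw [show -(x + lam) / 2 = 3 * lam / 2 + x / 4 + -x / 2 - (x / 4 + 2 * lam) by ring,
          exp_sub, exp_add, exp_add]
        field_simp

theorem ncChiSqPDF_nonneg (hk : 1 < k) (hlam : 0 < lam) (hx : 0 < x) : 0 ≤ ncChiSqPDF k lam x :=
  nonneg_of_mul_nonneg_right ((chiSqPDF_nonneg (by linarith) hx.le).trans
    (chiSqPDF_le_exp_mul_ncChiSqPDF hk hlam hx)) (exp_pos _)

theorem aestronglyMeasurable_ncChiSqPDF (hk : 1 < k) (hlam : 0 < lam) :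
    AEStronglyMeasurable (ncChiSqPDF k lam) (volume.restrict (Ioi 0)) := by
  have hS := measurable_besselSeries (ν := k / 2 - 1) (by linarith)
  have hmeas : Measurable fun x => x ^ (k / 2 - 1) * exp (-(x + lam) / 2) / 2 ^ (k / 2) *
      besselSeries (k / 2 - 1) (lam * x / 4) := by fun_prop
  exact hmeas.aestronglyMeasurable.congr <|
    (ae_restrict_mem measurableSet_Ioi).mono fun x hx => (ncChiSqPDF_eq hlam hx).symm

end NcChiSq

theorem integrableOn_ncChiSqPDF_rpow_iff (α k lam : ℝ)
    (hα : 0 < α) (hk : 1 < k) (hlam : 0 < lam) :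
    IntegrableOn (fun x => ncChiSqPDF k lam x ^ α) (Ioi (0 : ℝ)) ↔ k > 2 - 2 / α := by
  have hk0 : 0 < k := by linarith
  have hexponent : k > 2 - 2 / α ↔ -1 < α * (k / 2 - 1) := by
    rw [gt_iff_lt, sub_lt_comm, lt_div_iff₀ hα]
    constructor <;> intro h <;> linarith
  rw [hexponent]
  constructor
  · intro h
    rw [← integrableOn_rpow_exp_mul_chiSqPDF_iff (b := 0) hk0 hα (by norm_num)]
    refine h.rpow_of_le_const_mul (exp_pos (lam / 2)) hα.le measurableSet_Ioi
      (by unfold chiSqPDF; fun_prop : Measurable _).aestronglyMeasurable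
      (fun x hx => ?_) fun x hx => ?_
    · simpa using chiSqPDF_nonneg hk0 (le_of_lt hx)
    · simpa using chiSqPDF_le_exp_mul_ncChiSqPDF hk hlam hx
  · intro h
    refine ((integrableOn_rpow_exp_mul_chiSqPDF_iff (b := 1 / 4) hk0 hα (by norm_num)).2 h)
      |>.rpow_of_le_const_mul (exp_pos (3 * lam / 2)) hα.le measurableSet_Ioi
      (aestronglyMeasurable_ncChiSqPDF hk hlam) (fun x hx => ncChiSqPDF_nonneg hk hlam hx)
      fun x hx => ?_
    simpa [div_eq_inv_mul] using ncChiSqPDF_le_exp_mul_chiSqPDF hk hlam hx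
end

section
/- Let α > 0, k > 1 with k > 2 - 2/α. Then as λ → 0+, ∫_0^∞ f_{k,λ}^α(x) dx converges to ∫_0^∞ f_k^α(x) dx, where f_{k,λ} is the noncentral chi-squared PDF and f_k(x) = x^{k/2-1} e^{-x/2} / (2^{k/2} Γ(k/2)) is the central chi-squared PDF. -/
open Real MeasureTheory Set Filter

/-!
For `λ, x > 0` the series of `I_ν` rewrites the noncentral density as
`e^{-(x+λ)/2} x^{k/2-1} 2^{-k/2} ₀F̃₁(; k/2; λx/4)` with `₀F̃₁(; a; t) = ∑ tᵐ / (m! Γ(m + a))`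
entire in `t` and equal to `1/Γ(a)` at `t = 0`; this expression is continuous in `λ` up to `λ = 0`,
where it is the central density. Since `Γ(m + a) ≥ min 1 a · Γ(a)`, we get
`₀F̃₁(; a; t) ≤ eᵗ / (min 1 a · Γ(a))`, so for `λ ≤ 1` the `α`-th power of the density is dominated
by a multiple of `(x^{k/2-1} e^{-x/4})^α`, which is integrable near `0` exactly when
`α (k/2 - 1) > -1`, i.e. `k > 2 - 2/α`. Dominated convergence concludes.
-/

-- The regularized hypergeometric function `₀F̃₁(; a; t)`.
noncomputable def hyp0F1Reg (a t : ℝ) : ℝ :=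
  ∑' m : ℕ, t ^ m / (m.factorial * Gamma (m + a))

section hyp0F1Reg

variable {a : ℝ}

theorem min_one_mul_Gamma_le_Gamma_nat_add (ha : 0 < a) (m : ℕ) :
    min 1 a * Gamma a ≤ Gamma (m + a) := by
  have hΓ : 0 < Gamma a := Gamma_pos_of_pos ha
  induction m with
  | zero => simpa using mul_le_of_le_one_left hΓ.le (min_le_left 1 a)
  | succ n ih =>
    rw [Nat.cast_succ, add_right_comm, Gamma_add_one (by positivity)]
    rcases n.eq_zero_or_pos with rfl | hn
    · simpa using mul_le_mul_of_nonneg_right (min_le_right 1 a) hΓ.le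
    · have h1 : (1 : ℝ) ≤ n + a := by
        have : (1 : ℝ) ≤ n := by exact_mod_cast hn
        linarith
      have hΓn := Gamma_pos_of_pos (show (0 : ℝ) < n + a by positivity)
      nlinarith

theorem norm_hyp0F1Reg_term_le (ha : 0 < a) (t : ℝ) (m : ℕ) :
    ‖t ^ m / (m.factorial * Gamma (m + a))‖ ≤ |t| ^ m / m.factorial / (min 1 a * Gamma a) := by
  have hc : 0 < min 1 a * Gamma a := mul_pos (lt_min one_pos ha) (Gamma_pos_of_pos ha)
  have hΓ : 0 < Gamma (m + a) := Gamma_pos_of_pos (by positivity)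
  rw [norm_div, norm_pow, norm_mul, Real.norm_natCast, Real.norm_of_nonneg hΓ.le, div_div,
    Real.norm_eq_abs]
  gcongr
  exact min_one_mul_Gamma_le_Gamma_nat_add ha m

theorem summable_hyp0F1Reg_term (ha : 0 < a) (t : ℝ) :
    Summable fun m : ℕ => t ^ m / (m.factorial * Gamma (m + a)) :=
  .of_norm_bounded ((summable_pow_div_factorial |t|).div_const _) (norm_hyp0F1Reg_term_le ha t)

theorem continuous_hyp0F1Reg (ha : 0 < a) : Continuous (hyp0F1Reg a) := by
  refine continuous_iff_continuousAt.2 fun t₀ => ?_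
  set R := |t₀| + 1
  have hball : ContinuousOn (hyp0F1Reg a) (Metric.ball 0 R) := by
    refine continuousOn_tsum (fun m => by fun_prop)
      ((summable_pow_div_factorial R).div_const (min 1 a * Gamma a)) fun m t ht => ?_
    refine (norm_hyp0F1Reg_term_le ha t m).trans ?_
    have : |t| ≤ R := by simpa using (mem_ball_zero_iff.1 ht).le
    gcongr
  exact hball.continuousAt (Metric.isOpen_ball.mem_nhds (by simp [R]))

theorem hyp0F1Reg_zero (a : ℝ) : hyp0F1Reg a 0 = (Gamma a)⁻¹ := by
  rw [hyp0F1Reg, tsum_eq_single 0 fun m hm => by simp [zero_pow hm]]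
  simp

theorem hyp0F1Reg_nonneg (ha : 0 < a) {t : ℝ} (ht : 0 ≤ t) : 0 ≤ hyp0F1Reg a t :=
  tsum_nonneg fun m => by
    have := Gamma_pos_of_pos (show (0 : ℝ) < m + a by positivity)
    positivity

theorem hyp0F1Reg_le (ha : 0 < a) {t : ℝ} (ht : 0 ≤ t) :
    hyp0F1Reg a t ≤ exp t / (min 1 a * Gamma a) := by
  rw [exp_eq_exp_ℝ, NormedSpace.exp_eq_tsum_div, ← tsum_div_const]
  refine (summable_hyp0F1Reg_term ha t).tsum_le_tsum (fun m => ?_)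
    ((summable_pow_div_factorial t).div_const _)
  simpa [abs_of_nonneg ht] using (le_norm_self _).trans (norm_hyp0F1Reg_term_le ha t m)

end hyp0F1Reg

theorem besselI_eq_mul_hyp0F1Reg (ν : ℝ) {z : ℝ} (hz : 0 < z) :
    besselI ν z = (z / 2) ^ ν * hyp0F1Reg (ν + 1) (z ^ 2 / 4) := by
  rw [besselI, hyp0F1Reg, ← tsum_mul_left]
  refine tsum_congr fun m => ?_
  rw [add_comm (2 * (m : ℝ)), rpow_add (by positivity),
    show 2 * (m : ℝ) = ((2 * m : ℕ) : ℝ) by push_cast; ring, rpow_natCast, pow_mul, ← add_assoc]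
  ring

noncomputable def ncChiSqPDFSeries (k lam x : ℝ) : ℝ :=
  exp (-(x + lam) / 2) * x ^ (k / 2 - 1) / 2 ^ (k / 2) * hyp0F1Reg (k / 2) (lam * x / 4)

theorem ncChiSqPDF_eq_series (k : ℝ) {lam x : ℝ} (hlam : 0 < lam) (hx : 0 < x) :
    ncChiSqPDF k lam x = ncChiSqPDFSeries k lam x := by
  have hz : 0 < √(lam * x) := by positivity
  have hsq : x / lam * (√(lam * x) / 2) ^ 2 = (x / 2) ^ 2 := by
    rw [div_pow, sq_sqrt (by positivity)]
    field_simp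
  have hpow : (x / lam) ^ (k / 4 - 1 / 2) * (√(lam * x) / 2) ^ (k / 2 - 1) =
      x ^ (k / 2 - 1) / 2 ^ (k / 2 - 1) := by
    rw [show k / 2 - 1 = 2 * (k / 4 - 1 / 2) by ring, rpow_mul (by positivity), rpow_two,
      ← mul_rpow (by positivity) (by positivity), hsq, ← rpow_two, ← rpow_mul (by positivity),
      div_rpow hx.le zero_le_two]
  have htwo : (2 : ℝ) ^ (k / 2) = 2 ^ (k / 2 - 1) * 2 := by
    rw [← rpow_add_one two_ne_zero, sub_add_cancel]
  rw [ncChiSqPDF, ncChiSqPDFSeries, besselI_eq_mul_hyp0F1Reg _ hz, sq_sqrt (by positivity),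
    sub_add_cancel, htwo]
  linear_combination (exp (-(x + lam) / 2) * hyp0F1Reg (k / 2) (lam * x / 4) / 2) * hpow

theorem ncChiSqPDFSeries_zero (k x : ℝ) : ncChiSqPDFSeries k 0 x = chiSqPDF k x := by
  rw [ncChiSqPDFSeries, chiSqPDF, zero_mul, zero_div, hyp0F1Reg_zero, add_zero]
  ring

section ncChiSqPDFSeries

variable {k : ℝ}

theorem continuous_ncChiSqPDFSeries_lam (hk : 0 < k) (x : ℝ) :
    Continuous fun lam => ncChiSqPDFSeries k lam x := by
  have hF := continuous_hyp0F1Reg (half_pos hk)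
  unfold ncChiSqPDFSeries
  fun_prop

theorem continuousOn_ncChiSqPDFSeries (hk : 0 < k) (lam : ℝ) :
    ContinuousOn (ncChiSqPDFSeries k lam) (Ioi 0) := by
  have hF := continuous_hyp0F1Reg (half_pos hk)
  intro x hx
  have hrpow : ContinuousAt (fun x : ℝ => x ^ (k / 2 - 1)) x :=
    continuousAt_rpow_const _ _ (.inl (ne_of_gt hx))
  unfold ncChiSqPDFSeries
  fun_prop

theorem ncChiSqPDFSeries_nonneg (hk : 0 < k) {lam x : ℝ} (hlam : 0 ≤ lam) (hx : 0 ≤ x) :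
    0 ≤ ncChiSqPDFSeries k lam x :=
  mul_nonneg (by positivity) (hyp0F1Reg_nonneg (half_pos hk) (by positivity))

theorem ncChiSqPDFSeries_le (hk : 0 < k) {lam x : ℝ} (hlam₀ : 0 ≤ lam) (hlam₁ : lam ≤ 1)
    (hx : 0 ≤ x) :
    ncChiSqPDFSeries k lam x ≤
      x ^ (k / 2 - 1) * exp (-(1 / 4) * x) / (2 ^ (k / 2) * (min 1 (k / 2) * Gamma (k / 2))) := by
  have hexp : exp (-(x + lam) / 2) * exp (lam * x / 4) ≤ exp (-(1 / 4) * x) := by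
    rw [← exp_add, exp_le_exp]
    nlinarith
  calc ncChiSqPDFSeries k lam x
      ≤ exp (-(x + lam) / 2) * x ^ (k / 2 - 1) / 2 ^ (k / 2) *
          (exp (lam * x / 4) / (min 1 (k / 2) * Gamma (k / 2))) := by
        rw [ncChiSqPDFSeries]
        gcongr
        exact hyp0F1Reg_le (half_pos hk) (by positivity)
    _ = x ^ (k / 2 - 1) * (exp (-(x + lam) / 2) * exp (lam * x / 4)) /
          (2 ^ (k / 2) * (min 1 (k / 2) * Gamma (k / 2))) := by ring
    _ ≤ _ := by gcongr

end ncChiSqPDFSeries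

theorem integrableOn_rpow_mul_exp_neg_mul_rpow_const {s b p : ℝ} (hp : 0 < p) (hb : 0 < b)
    (hs : -1 < p * s) :
    IntegrableOn (fun x : ℝ => (x ^ s * exp (-b * x)) ^ p) (Ioi 0) := by
  refine (integrableOn_rpow_mul_exp_neg_mul_rpow hs one_pos (mul_pos hp hb)).congr_fun
    (fun x (hx : 0 < x) => ?_) measurableSet_Ioi
  dsimp only
  rw [mul_rpow (by positivity) (exp_pos _).le, ← rpow_mul hx.le, ← exp_mul, rpow_one]
  ring_nf

theorem tendsto_integral_ncChiSqPDF_rpow (α k : ℝ)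
    (hα : 0 < α) (hk : 1 < k) (hk' : k > 2 - 2 / α) :
    Tendsto (fun lam => ∫ x in Ioi (0 : ℝ), ncChiSqPDF k lam x ^ α)
      (nhdsWithin 0 (Ioi (0 : ℝ)))
      (nhds (∫ x in Ioi (0 : ℝ), chiSqPDF k x ^ α)) := by
  have hk₀ : 0 < k := one_pos.trans hk
  have hs : -1 < α * (k / 2 - 1) := by
    have hα₂ : 2 / α * α = 2 := div_mul_cancel₀ _ hα.ne'
    nlinarith
  set C := 2 ^ (k / 2) * (min 1 (k / 2) * Gamma (k / 2))
  have hC : 0 < C := by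
    have hΓ := Gamma_pos_of_pos (half_pos hk₀)
    have hmin := lt_min one_pos (half_pos hk₀)
    positivity
  simp_rw [← ncChiSqPDFSeries_zero]
  refine .congr' (eventually_nhdsWithin_of_forall fun lam (hlam : 0 < lam) =>
    setIntegral_congr_fun measurableSet_Ioi fun x (hx : 0 < x) => by
      rw [ncChiSqPDF_eq_series k hlam hx]) ?_
  refine tendsto_integral_filter_of_dominated_convergence
    (fun x => (x ^ (k / 2 - 1) * exp (-(1 / 4) * x)) ^ α / C ^ α) ?_ ?_ ?_ ?_
  · exact .of_forall fun lam => ((continuousOn_ncChiSqPDFSeries hk₀ lam).rpow_const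
      fun _ _ => .inr hα.le).aestronglyMeasurable measurableSet_Ioi
  · filter_upwards [Ioc_mem_nhdsGT one_pos] with lam hlam
    refine (ae_restrict_iff' measurableSet_Ioi).2 (.of_forall fun x (hx : 0 < x) => ?_)
    have h₀ := ncChiSqPDFSeries_nonneg hk₀ hlam.1.le hx.le
    rw [norm_of_nonneg (rpow_nonneg h₀ _), ← div_rpow (by positivity) hC.le]
    exact rpow_le_rpow h₀ (ncChiSqPDFSeries_le hk₀ hlam.1.le hlam.2 hx.le) hα.le
  · exact (integrableOn_rpow_mul_exp_neg_mul_rpow_const hα (by norm_num) hs).div_const _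
  · exact .of_forall fun x => (((continuous_ncChiSqPDFSeries_lam hk₀ x).tendsto 0).mono_left
      nhdsWithin_le_nhds).rpow_const (.inr hα.le)
end
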